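/- arXiv:2209.12285 — 7 statements merged into one kernel-verified Lean document; each statement's English description precedes it below -/
import Mathlib

section
/- Let N ≥ 1, let y : Fin N → {0,1}, and let c_L, d : Fin N → ℝ be positive functions. Define B(P, y) := P^{1−y}(1−P)^{y} for P ∈ [0,1] and y ∈ {0,1} (with the convention 0^0 = 1), and for t ∈ {0,1}^N and P ∈ [0,1] define F(t, P) := ∏_{i : t_i = 1} c_{L,i} · ∏_{i : t_i = 0} d_i · B(P, y_i). Let 𝒫 := { T_n / T_d : T_d ∈ {1, …, N}, T_n ∈ {0, …, T_d} } ⊆ [0,1]. Then there exist t* ∈ {0,1}^N and P* ∈ 𝒫 such that F(t*, P*) ≥ F(t, P) for all t ∈ {0,1}^N and all P ∈ [0,1]; that is, the supremum of F over {0,1}^N × [0,1] is attained at a point whose second coordinate lies in the finite set 𝒫. -/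
/-!
For a fixed trust vector `t`, the likelihood depends on `P` only through `P ^ A * (1 - P) ^ B`,
where `A` and `B` count the robots deemed malicious with `y i = 0` and `y i = 1`. By weighted AM-GM
this is maximised at the empirical frequency `A / (A + B)`, whose denominator is at most `N`.
Maximising the profile likelihood over the finitely many `t` gives the optimum.
-/

open Finset

/-- The paper's `𝒫`. -/
def fractionSet (N : ℕ) : Set ℝ :=
  {p | ∃ Tn Td : ℕ, 1 ≤ Td ∧ Td ≤ N ∧ Tn ≤ Td ∧ p = (Tn : ℝ) / (Td : ℝ)}

theorem natCast_div_add_mem_fractionSet {a b N : ℕ} (hN : 1 ≤ N) (h : a + b ≤ N) :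
    (a : ℝ) / (a + b) ∈ fractionSet N := by
  rcases Nat.eq_zero_or_pos (a + b) with h0 | h0
  · obtain ⟨rfl, rfl⟩ : a = 0 ∧ b = 0 := by omega
    exact ⟨0, 1, le_rfl, hN, zero_le_one, by simp⟩
  · exact ⟨a, a + b, h0, h, Nat.le_add_right a b, by push_cast; rfl⟩

theorem pow_mul_pow_le_one_of_mul_add_mul_eq {x y : ℝ} (hx : 0 ≤ x) (hy : 0 ≤ y) {a b : ℕ}
    (h : a * x + b * y = a + b) : x ^ a * y ^ b ≤ 1 := by
  rcases Nat.eq_zero_or_pos (a + b) with h0 | h0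
  · obtain ⟨rfl, rfl⟩ : a = 0 ∧ b = 0 := by omega
    simp
  set n : ℝ := a + b
  have hn : 0 < n := by simp only [n]; exact_mod_cast h0
  have hamgm : x ^ (a / n) * y ^ (b / n) ≤ 1 := by
    calc x ^ (a / n) * y ^ (b / n) ≤ a / n * x + b / n * y :=
          Real.geom_mean_le_arith_mean2_weighted (by positivity) (by positivity) hx hy
            (by rw [← add_div, div_self hn.ne'])
      _ = 1 := by rw [div_mul_eq_mul_div, div_mul_eq_mul_div, ← add_div, h, div_self hn.ne']
  have hpow : (x ^ (a / n) * y ^ (b / n)) ^ (a + b) = x ^ a * y ^ b := by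
    have hcast : ((a + b : ℕ) : ℝ) = n := by push_cast; rfl
    rw [mul_pow, ← Real.rpow_mul_natCast hx, ← Real.rpow_mul_natCast hy, hcast,
      div_mul_cancel₀ _ hn.ne', div_mul_cancel₀ _ hn.ne', Real.rpow_natCast, Real.rpow_natCast]
  rw [← hpow]
  exact pow_le_one₀ (by positivity) hamgm

/-- For `a = b = 0` the junk value `0 / 0 = 0` is used, and `P = 0` is indeed a maximiser. -/
theorem pow_mul_one_sub_pow_le {P : ℝ} (hP : P ∈ Set.Icc (0 : ℝ) 1) (a b : ℕ) :
    P ^ a * (1 - P) ^ b ≤ ((a : ℝ) / (a + b)) ^ a * (1 - (a : ℝ) / (a + b)) ^ b := by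
  obtain ⟨hP0, hP1⟩ := hP
  rcases Nat.eq_zero_or_pos a with rfl | ha
  · simpa using pow_le_one₀ (sub_nonneg.2 hP1) (by linarith)
  rcases Nat.eq_zero_or_pos b with rfl | hb
  · have ha' : (a : ℝ) ≠ 0 := by positivity
    simpa [ha'] using pow_le_one₀ hP0 hP1
  set Q : ℝ := a / (a + b)
  have hQ0 : 0 < Q := by positivity
  have hQ1 : 1 - Q = b / (a + b) := by simp only [Q]; field_simp; ring
  have hQ1' : 0 < 1 - Q := by rw [hQ1]; positivity
  have hratio : (P / Q) ^ a * ((1 - P) / (1 - Q)) ^ b ≤ 1 := by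
    refine pow_mul_pow_le_one_of_mul_add_mul_eq (by positivity)
      (div_nonneg (by linarith) hQ1'.le) ?_
    rw [hQ1]
    simp only [Q]
    field_simp
    ring
  rwa [div_pow P, div_pow (1 - P), div_mul_div_comm, div_le_one (by positivity)] at hratio

theorem prod_mul_pow_mul_pow {ι : Type*} (s : Finset ι) (c : ι → ℝ) (u v : ι → ℕ)
    (x z : ℝ) :
    ∏ i ∈ s, c i * (x ^ u i * z ^ v i) =
      (∏ i ∈ s, c i) * (x ^ (∑ i ∈ s, u i) * z ^ (∑ i ∈ s, v i)) := by
  rw [prod_mul_distrib, prod_mul_distrib, prod_pow_eq_pow_sum, prod_pow_eq_pow_sum]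

section Likelihood

variable {ι : Type*} [Fintype ι]

def malicious (t : ι → Bool) : Finset ι :=
  univ.filter (fun i => t i = false)

/-- The paper's `F (t, P)`. -/
def aglrtLikelihood (cL d : ι → ℝ) (y : ι → ℕ) (t : ι → Bool) (P : ℝ) : ℝ :=
  (∏ i ∈ univ.filter (fun i => t i = true), cL i) *
    ∏ i ∈ malicious t, (d i * (P ^ (1 - y i) * (1 - P) ^ (y i)))

noncomputable def mleProb (y : ι → ℕ) (t : ι → Bool) : ℝ :=
  ((∑ i ∈ malicious t, (1 - y i) : ℕ) : ℝ) /
    (((∑ i ∈ malicious t, (1 - y i) : ℕ) : ℝ) + ((∑ i ∈ malicious t, y i : ℕ) : ℝ))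

theorem aglrtLikelihood_le_mleProb {cL d : ι → ℝ} (hcL : ∀ i, 0 ≤ cL i)
    (hd : ∀ i, 0 ≤ d i)
    (y : ι → ℕ) (t : ι → Bool) {P : ℝ} (hP : P ∈ Set.Icc (0 : ℝ) 1) :
    aglrtLikelihood cL d y t P ≤ aglrtLikelihood cL d y t (mleProb y t) := by
  unfold aglrtLikelihood
  rw [prod_mul_pow_mul_pow, prod_mul_pow_mul_pow]
  refine mul_le_mul_of_nonneg_left (mul_le_mul_of_nonneg_left ?_ ?_) ?_
  · exact pow_mul_one_sub_pow_le hP _ _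
  · exact prod_nonneg fun i _ => hd i
  · exact prod_nonneg fun i _ => hcL i

theorem mleProb_mem_fractionSet {N : ℕ} (hN : 1 ≤ N) (hcard : Fintype.card ι ≤ N)
    {y : ι → ℕ} (hy : ∀ i, y i ≤ 1) (t : ι → Bool) : mleProb y t ∈ fractionSet N := by
  have hcard_malicious : (malicious t).card ≤ N := (card_filter_le univ _).trans hcard
  refine natCast_div_add_mem_fractionSet hN (le_trans ?_ hcard_malicious)
  rw [← sum_add_distrib, card_eq_sum_ones]
  exact (sum_congr rfl fun i _ => by have := hy i; omega).le

end Likelihood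

/-- Theorem 2 of the paper (attainment part): the joint maximization of the likelihood
`F (t, P) = (∏_{i : t i} cL i) * ∏_{i : ¬ t i} d i * P ^ (1 - y i) * (1 - P) ^ (y i)`
over trust vectors `t ∈ {0,1}^N` and `P ∈ [0,1]` is attained at some `(t*, P*)` with
`P*` in the finite set `𝒫 = {Tn / Td : 1 ≤ Td ≤ N, 0 ≤ Tn ≤ Td}`. -/
theorem aglrt_max_attained_on_fraction_set
    (N : ℕ) (hN : 1 ≤ N) (y : Fin N → ℕ) (hy : ∀ i, y i ≤ 1)
    (cL d : Fin N → ℝ) (hcL : ∀ i, 0 < cL i) (hd : ∀ i, 0 < d i) :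
    ∃ (tstar : Fin N → Bool) (Pstar : ℝ),
      (∃ Tn Td : ℕ, 1 ≤ Td ∧ Td ≤ N ∧ Tn ≤ Td ∧ Pstar = (Tn : ℝ) / (Td : ℝ)) ∧
      ∀ (t : Fin N → Bool), ∀ P ∈ Set.Icc (0 : ℝ) 1,
        (∏ i ∈ Finset.univ.filter (fun i => t i = true), cL i) *
            ∏ i ∈ Finset.univ.filter (fun i => t i = false),
              (d i * (P ^ (1 - y i) * (1 - P) ^ (y i)))
          ≤ (∏ i ∈ Finset.univ.filter (fun i => tstar i = true), cL i) *
              ∏ i ∈ Finset.univ.filter (fun i => tstar i = false),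
                (d i * (Pstar ^ (1 - y i) * (1 - Pstar) ^ (y i))) := by
  obtain ⟨tstar, -, htstar⟩ := exists_max_image univ
    (fun t => aglrtLikelihood cL d y t (mleProb y t)) univ_nonempty
  refine ⟨tstar, mleProb y tstar,
    mleProb_mem_fractionSet hN (Fintype.card_fin N).le hy tstar, fun t P hP => ?_⟩
  calc _ ≤ aglrtLikelihood cL d y t (mleProb y t) :=
        aglrtLikelihood_le_mleProb (fun i => (hcL i).le) (fun i => (hd i).le) y t hP
    _ ≤ _ := htstar t (mem_univ t)
end

section
/- Let N ≥ 1, let y : Fin N → {0,1}, and let c_L, d : Fin N → ℝ be positive functions. Define B(P, y) := P^{1−y}(1−P)^{y} for P ∈ [0,1] and y ∈ {0,1} (with the convention 0^0 = 1), and for t ∈ {0,1}^N and P ∈ [0,1] define F(t, P) := ∏_{i : t_i = 1} c_{L,i} · ∏_{i : t_i = 0} d_i · B(P, y_i). Let 𝒫 := { T_n / T_d : T_d ∈ {1, …, N}, T_n ∈ {0, …, T_d} }. Then sup_{t ∈ {0,1}^N, P ∈ [0,1]} F(t, P) = max_{P ∈ 𝒫} ∏_{i=1}^N max( c_{L,i},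 d_i · B(P, y_i) ). -/
/-!
For a fixed `P`, letting each `t i` select the larger of the two scores maximizes the likelihood
over `t`, with value `∏ i, max (cL i) (d i * B(P, y i))`. For a fixed `t`, the likelihood depends on
`P` only through `P ^ a * (1 - P) ^ b`, where `a` and `b` count the untrusted robots with `y i = 0`
and `y i = 1`; by weighted AM-GM this is maximized at `P = a / (a + b)`, a fraction in `𝒫` since
`a + b ≤ N`. So every likelihood value is dominated by a profile value at a point of `𝒫`, and each
such profile value is itself a likelihood value.
-/

open Finset

theorem pow_mul_pow_le_weighted_mean_pow {x y : ℝ} (hx : 0 ≤ x) (hy : 0 ≤ y) (a b : ℕ) :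
    x ^ a * y ^ b ≤ ((a * x + b * y) / (a + b)) ^ (a + b) := by
  rcases Nat.eq_zero_or_pos (a + b) with hab | hab
  · obtain ⟨rfl, rfl⟩ : a = 0 ∧ b = 0 := by omega
    simp
  have amgm := Real.geom_mean_le_arith_mean univ ![(a : ℝ), b] ![x, y]
    (by simp [Fin.forall_fin_two]) (by simpa using (Nat.cast_pos.2 hab : (0 : ℝ) < ↑(a + b)))
    (by simp [Fin.forall_fin_two, hx, hy])
  simp only [Fin.prod_univ_two, Fin.sum_univ_two, Matrix.cons_val_zero, Matrix.cons_val_one,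
    Matrix.cons_val_fin_one, Real.rpow_natCast] at amgm
  calc x ^ a * y ^ b = ((x ^ a * y ^ b) ^ ((↑(a + b) : ℝ)⁻¹)) ^ (a + b) :=
        (Real.rpow_inv_natCast_pow (by positivity) hab.ne').symm
    _ ≤ ((a * x + b * y) / (a + b)) ^ (a + b) := by
        gcongr
        push_cast
        exact amgm

theorem pow_mul_one_sub_pow_le_at_div_add {p : ℝ} (hp : p ∈ Set.Icc (0 : ℝ) 1) (a b : ℕ) :
    p ^ a * (1 - p) ^ b ≤ (a / (a + b) : ℝ) ^ a * (1 - a / (a + b) : ℝ) ^ b := by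
  obtain ⟨hp0, hp1⟩ := hp
  rcases Nat.eq_zero_or_pos a with rfl | ha
  · simpa using pow_le_one₀ (sub_nonneg.2 hp1) (by linarith)
  rcases Nat.eq_zero_or_pos b with rfl | hb
  · have : (a : ℝ) ≠ 0 := by positivity
    simpa [this] using pow_le_one₀ hp0 hp1
  have hn : (0 : ℝ) < a + b := by positivity
  have h1q : 1 - a / (a + b) = (b / (a + b) : ℝ) := by field_simp; ring
  rw [h1q]
  set q : ℝ := a / (a + b)
  set r : ℝ := b / (a + b)
  have amgm := pow_mul_pow_le_weighted_mean_pow (div_nonneg hp0 (by positivity : 0 ≤ q))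
    (div_nonneg (sub_nonneg.2 hp1) (by positivity : 0 ≤ r)) a b
  have hmean : ((a * (p / q) + b * ((1 - p) / r)) / (a + b) : ℝ) = 1 := by
    simp only [q, r]; field_simp; ring
  have hsplit : p ^ a * (1 - p) ^ b = q ^ a * r ^ b * ((p / q) ^ a * ((1 - p) / r) ^ b) := by
    rw [mul_mul_mul_comm, ← mul_pow, ← mul_pow, mul_div_cancel₀ _ (by positivity),
      mul_div_cancel₀ _ (by positivity)]
  rw [hmean, one_pow] at amgm
  rw [hsplit]
  exact mul_le_of_le_one_right (by positivity) amgm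

section BoolSelection

variable {ι : Type*} (s : Finset ι)

theorem prod_filter_true_mul_prod_filter_false {M : Type*} [CommMonoid M] (t : ι → Bool)
    (f g : ι → M) :
    (∏ i ∈ s.filter (t · = true), f i) * ∏ i ∈ s.filter (t · = false), g i =
      ∏ i ∈ s, if t i then f i else g i := by
  simp only [prod_ite, Bool.not_eq_true]

theorem prod_filter_true_mul_prod_filter_false_le_prod_max {R : Type*} [CommSemiring R]
    [LinearOrder R] [IsOrderedRing R] (t : ι → Bool) {f g : ι → R}
    (hf : ∀ i ∈ s, 0 ≤ f i) (hg : ∀ i ∈ s, 0 ≤ g i) :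
    (∏ i ∈ s.filter (t · = true), f i) * ∏ i ∈ s.filter (t · = false), g i ≤
      ∏ i ∈ s, max (f i) (g i) := by
  rw [prod_filter_true_mul_prod_filter_false]
  refine prod_le_prod (fun i hi => ?_) (fun i _ => ?_)
  · cases t i <;> simp [hf i hi, hg i hi]
  · cases t i <;> simp

theorem exists_prod_filter_true_mul_prod_filter_false_eq_prod_max {M : Type*} [CommMonoid M]
    [LinearOrder M] (f g : ι → M) :
    ∃ t : ι → Bool, (∏ i ∈ s.filter (t · = true), f i) * ∏ i ∈ s.filter (t · = false), g i =
      ∏ i ∈ s, max (f i) (g i) := by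
  refine ⟨fun i => decide (g i ≤ f i), ?_⟩
  rw [prod_filter_true_mul_prod_filter_false]
  refine prod_congr rfl (fun i _ => ?_)
  by_cases h : g i ≤ f i
  · simp [h]
  · simp [h, (not_le.1 h).le]

end BoolSelection

-- For `a + b = 0` the right-hand side is the junk value `0 / 0 = 0`, realized as `0 / 1`.
theorem exists_fraction_eq_div_add {a b N : ℕ} (hN : 1 ≤ N) (hab : a + b ≤ N) :
    ∃ Tn Td : ℕ, 1 ≤ Td ∧ Td ≤ N ∧ Tn ≤ Td ∧ (Tn / Td : ℝ) = a / (a + b) := by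
  rcases Nat.eq_zero_or_pos (a + b) with h | h
  · obtain ⟨rfl, rfl⟩ : a = 0 ∧ b = 0 := by omega
    exact ⟨0, 1, le_rfl, hN, zero_le_one, by simp⟩
  · exact ⟨a, a + b, h, hab, Nat.le_add_right a b, by push_cast; rfl⟩

def bernoulliLik (P : ℝ) (y : ℕ) : ℝ := P ^ (1 - y) * (1 - P) ^ y

theorem bernoulliLik_nonneg {P : ℝ} (hP : P ∈ Set.Icc (0 : ℝ) 1) (y : ℕ) : 0 ≤ bernoulliLik P y :=
  mul_nonneg (pow_nonneg hP.1 _) (pow_nonneg (sub_nonneg.2 hP.2) _)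

theorem natCast_div_mem_Icc {m n : ℕ} (h : m ≤ n) : (m / n : ℝ) ∈ Set.Icc (0 : ℝ) 1 :=
  ⟨by positivity, div_le_one_of_le₀ (by exact_mod_cast h) (by positivity)⟩

section Likelihood

variable {ι : Type*} (y : ι → ℕ) (d : ι → ℝ)

theorem prod_mul_bernoulliLik (s : Finset ι) (P : ℝ) :
    ∏ i ∈ s, d i * bernoulliLik P (y i) =
      (∏ i ∈ s, d i) * (P ^ (∑ i ∈ s, (1 - y i)) * (1 - P) ^ (∑ i ∈ s, y i)) := by
  simp only [bernoulliLik, prod_mul_distrib, prod_pow_eq_pow_sum]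

theorem prod_mul_bernoulliLik_le_at_mle {s : Finset ι} (hd : ∀ i ∈ s, 0 ≤ d i) {P : ℝ}
    (hP : P ∈ Set.Icc (0 : ℝ) 1) :
    ∏ i ∈ s, d i * bernoulliLik P (y i) ≤
      ∏ i ∈ s, d i * bernoulliLik
        ((∑ i ∈ s, (1 - y i) : ℕ) / ((∑ i ∈ s, (1 - y i) : ℕ) + (∑ i ∈ s, y i : ℕ))) (y i) := by
  rw [prod_mul_bernoulliLik, prod_mul_bernoulliLik]
  exact mul_le_mul_of_nonneg_left (pow_mul_one_sub_pow_le_at_div_add hP _ _) (prod_nonneg hd)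

variable [Fintype ι] (cL : ι → ℝ)

def jointLikelihood (t : ι → Bool) (P : ℝ) : ℝ :=
  (∏ i ∈ univ.filter (t · = true), cL i) *
    ∏ i ∈ univ.filter (t · = false), d i * bernoulliLik P (y i)

def profileLikelihood (P : ℝ) : ℝ :=
  ∏ i, max (cL i) (d i * bernoulliLik P (y i))

theorem exists_jointLikelihood_eq_profileLikelihood (P : ℝ) :
    ∃ t, jointLikelihood y d cL t P = profileLikelihood y d cL P :=
  exists_prod_filter_true_mul_prod_filter_false_eq_prod_max _ _ _

theorem exists_fraction_jointLikelihood_le_profileLikelihood (hN : 1 ≤ Fintype.card ι)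
    (hy : ∀ i, y i ≤ 1) (hd : ∀ i, 0 ≤ d i) (hcL : ∀ i, 0 ≤ cL i) (t : ι → Bool) {P : ℝ}
    (hP : P ∈ Set.Icc (0 : ℝ) 1) :
    ∃ Tn Td : ℕ, 1 ≤ Td ∧ Td ≤ Fintype.card ι ∧ Tn ≤ Td ∧
      jointLikelihood y d cL t P ≤ profileLikelihood y d cL (Tn / Td) := by
  set S := univ.filter (t · = false)
  have hcount : ∑ i ∈ S, (1 - y i) + ∑ i ∈ S, y i = #S := by
    rw [← sum_add_distrib, card_eq_sum_ones]
    exact sum_congr rfl fun i _ => Nat.sub_add_cancel (hy i)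
  obtain ⟨Tn, Td, hTd, hTdN, hTn, hmle⟩ := exists_fraction_eq_div_add hN (hcount ▸ card_le_univ S)
  refine ⟨Tn, Td, hTd, hTdN, hTn, ?_⟩
  calc jointLikelihood y d cL t P
      ≤ jointLikelihood y d cL t (Tn / Td) := by
        rw [jointLikelihood, jointLikelihood, hmle]
        exact mul_le_mul_of_nonneg_left (prod_mul_bernoulliLik_le_at_mle y d (fun i _ => hd i) hP)
          (prod_nonneg fun i _ => hcL i)
    _ ≤ profileLikelihood y d cL (Tn / Td) :=
        prod_filter_true_mul_prod_filter_false_le_prod_max _ _ (fun i _ => hcL i)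
          fun i _ => mul_nonneg (hd i) (bernoulliLik_nonneg (natCast_div_mem_Icc hTn) _)

end Likelihood

/-- Correctness of the A-GLRT maximization step (Theorem 2 + Lemma 5 of the paper):
the supremum of the joint likelihood over trust vectors `t ∈ {0,1}^N` and malicious error
probability `P ∈ [0,1]` equals the maximum, over `P` in the finite set
`𝒫 = {Tn / Td : 1 ≤ Td ≤ N, 0 ≤ Tn ≤ Td}`, of the product over robots of the larger of
the legitimate score `cL i` and the malicious score `d i * P ^ (1 - y i) * (1 - P) ^ (y i)`. -/
theorem aglrt_sup_eq_max_over_fractions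
    (N : ℕ) (hN : 1 ≤ N) (y : Fin N → ℕ) (hy : ∀ i, y i ≤ 1)
    (cL d : Fin N → ℝ) (hcL : ∀ i, 0 < cL i) (hd : ∀ i, 0 < d i) :
    sSup {x : ℝ | ∃ (t : Fin N → Bool), ∃ P ∈ Set.Icc (0 : ℝ) 1,
        x = (∏ i ∈ Finset.univ.filter (fun i => t i = true), cL i) *
              ∏ i ∈ Finset.univ.filter (fun i => t i = false),
                (d i * (P ^ (1 - y i) * (1 - P) ^ (y i)))}
      = sSup {x : ℝ | ∃ Tn Td : ℕ, 1 ≤ Td ∧ Td ≤ N ∧ Tn ≤ Td ∧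
          x = ∏ i, max (cL i)
                (d i * (((Tn : ℝ) / (Td : ℝ)) ^ (1 - y i) *
                  (1 - (Tn : ℝ) / (Td : ℝ)) ^ (y i)))} := by
  refine csSup_eq_csSup_of_forall_exists_le ?_ ?_
  · rintro _ ⟨t, P, hP, rfl⟩
    obtain ⟨Tn, Td, hTd, hTdN, hTn, hle⟩ :=
      exists_fraction_jointLikelihood_le_profileLikelihood y d cL (by simpa using hN) hy
        (fun i => (hd i).le) (fun i => (hcL i).le) t hP
    exact ⟨_, ⟨Tn, Td, hTd, by simpa using hTdN, hTn, rfl⟩, hle⟩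
  · rintro _ ⟨Tn, Td, -, -, hTn, rfl⟩
    obtain ⟨t, ht⟩ := exists_jointLikelihood_eq_profileLikelihood y d cL (Tn / Td)
    exact ⟨_, ⟨t, _, natCast_div_mem_Icc hTn, rfl⟩, ht.ge⟩
end

section
/- Let N ≥ 1, let Fin N be partitioned into disjoint sets L and M, let w_1 > 0, w_0 > 0, γ ∈ ℝ, and τ_L, τ_M, q ∈ [0,1]. For r ∈ [0,1] define P_FA(r) := ∑_{t̂ ∈ {0,1}^N} ∑_{y ∈ {0,1}^N} 𝟙[ ∑_{i=1}^N t̂_i (w_1 y_i − w_0 (1 − y_i)) ≥ γ ] · ∏_{i ∈ L} τ_L^{t̂_i}(1−τ_L)^{1−t̂_i} q^{y_i}(1−q)^{1−y_i} · ∏_{i ∈ M} τ_M^{t̂_i}(1−τ_M)^{1−t̂_i} r^{y_i}(1−r)^{1−y_i}. Then P_FA is nondecreasing on [0,1]; in particular P_FA(r) ≤ P_FA(1) for every r ∈ [0,1]. -/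
open Finset

/-- The fusion center's false-alarm probability under hypothesis `H₀`: robot `i` is trusted
(`t̂ i = 1`) with probability `τL` if legitimate (`i ∈ L`) and `τM` if malicious (`i ∈ M`);
it reports bit `1` with probability `q` if legitimate and `r` if malicious; a false alarm is
declared when the trusted weighted statistic `∑ t̂ i * (w1 * y i - w0 * (1 - y i))` reaches
the threshold `γ`. -/
noncomputable def falseAlarmProb (N : ℕ) (L M : Finset (Fin N)) (w1 w0 γ τL τM q r : ℝ) : ℝ :=
  ∑ th : Fin N → Fin 2, ∑ y : Fin N → Fin 2,
    (if γ ≤ ∑ i, ((th i : ℕ) : ℝ) *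
        (w1 * ((y i : ℕ) : ℝ) - w0 * (1 - ((y i : ℕ) : ℝ))) then (1 : ℝ) else 0) *
    (∏ i ∈ L, τL ^ (th i : ℕ) * (1 - τL) ^ (1 - (th i : ℕ)) *
        (q ^ (y i : ℕ) * (1 - q) ^ (1 - (y i : ℕ)))) *
    ∏ i ∈ M, τM ^ (th i : ℕ) * (1 - τM) ^ (1 - (th i : ℕ)) *
        (r ^ (y i : ℕ) * (1 - r) ^ (1 - (y i : ℕ)))



namespace FalseAlarmAux

variable {N : ℕ}

/-- Indicator of the false-alarm event. -/
noncomputable def ind (w1 w0 γ : ℝ) (th y : Fin N → Fin 2) : ℝ :=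
  if γ ≤ ∑ i, ((th i : ℕ) : ℝ) *
      (w1 * ((y i : ℕ) : ℝ) - w0 * (1 - ((y i : ℕ) : ℝ))) then (1 : ℝ) else 0

/-- Trust weight of robot `i`. -/
noncomputable def Aw (L : Finset (Fin N)) (τL τM : ℝ) (i : Fin N) (t : Fin 2) : ℝ :=
  (if i ∈ L then τL else τM) ^ (t : ℕ) * (1 - (if i ∈ L then τL else τM)) ^ (1 - (t : ℕ))

/-- Bernoulli weight. -/
noncomputable def Bw (p : ℝ) (b : Fin 2) : ℝ := p ^ (b : ℕ) * (1 - p) ^ (1 - (b : ℕ))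

/-- Generalized false-alarm probability with per-robot bit probability `ρ`. -/
noncomputable def G (L : Finset (Fin N)) (w1 w0 γ τL τM : ℝ) (ρ : Fin N → ℝ) : ℝ :=
  ∑ th : Fin N → Fin 2, ∑ y : Fin N → Fin 2,
    ind w1 w0 γ th y * (∏ i, Aw L τL τM i (th i)) * ∏ i, Bw (ρ i) (y i)

lemma Bw_nonneg {p : ℝ} (hp : p ∈ Set.Icc (0 : ℝ) 1) (b : Fin 2) : 0 ≤ Bw p b :=
  mul_nonneg (pow_nonneg hp.1 _) (pow_nonneg (by linarith [hp.2]) _)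

lemma Aw_nonneg {L : Finset (Fin N)} {τL τM : ℝ} (hτL : τL ∈ Set.Icc (0 : ℝ) 1)
    (hτM : τM ∈ Set.Icc (0 : ℝ) 1) (i : Fin N) (t : Fin 2) : 0 ≤ Aw L τL τM i t := by
  unfold Aw
  split_ifs with h
  · exact mul_nonneg (pow_nonneg hτL.1 _) (pow_nonneg (by linarith [hτL.2]) _)
  · exact mul_nonneg (pow_nonneg hτM.1 _) (pow_nonneg (by linarith [hτM.2]) _)

lemma ind_nonneg (w1 w0 γ : ℝ) (th y : Fin N → Fin 2) : 0 ≤ ind w1 w0 γ th y := by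
  unfold ind; split_ifs <;> norm_num

lemma ind_mono (w1 w0 γ : ℝ) (hw : 0 ≤ w1 + w0) (th y y' : Fin N → Fin 2)
    (h : ∀ i, ((y i : ℕ) : ℝ) ≤ ((y' i : ℕ) : ℝ)) :
    ind w1 w0 γ th y ≤ ind w1 w0 γ th y' := by
  unfold ind
  split_ifs with h1 h2
  · exact le_refl _
  · exfalso
    apply h2
    refine le_trans h1 (Finset.sum_le_sum fun i _ => ?_)
    have ht : (0 : ℝ) ≤ ((th i : ℕ) : ℝ) := by positivity
    nlinarith [mul_nonneg ht (mul_nonneg hw (sub_nonneg.2 (h i)))]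
  · norm_num
  · exact le_refl _

lemma G_update_le (L : Finset (Fin N)) (w1 w0 γ τL τM : ℝ) (hw : 0 ≤ w1 + w0)
    (hτL : τL ∈ Set.Icc (0 : ℝ) 1) (hτM : τM ∈ Set.Icc (0 : ℝ) 1)
    (ρ : Fin N → ℝ) (hρ : ∀ i, ρ i ∈ Set.Icc (0 : ℝ) 1)
    (j : Fin N) (a b : ℝ) (ha : a ∈ Set.Icc (0 : ℝ) 1) (hb : b ∈ Set.Icc (0 : ℝ) 1)
    (hab : a ≤ b) :
    G L w1 w0 γ τL τM (Function.update ρ j a) ≤ G L w1 w0 γ τL τM (Function.update ρ j b) := by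
  classical
  unfold G
  refine Finset.sum_le_sum fun th _ => ?_
  set e := (Equiv.piSplitAt j (fun _ : Fin N => Fin 2)).symm with he
  set K := ∏ i, Aw L τL τM i (th i) with hK
  have hK0 : 0 ≤ K := Finset.prod_nonneg fun i _ => Aw_nonneg hτL hτM i (th i)
  have hBw0 : ∀ t : ℝ, Bw t 0 = 1 - t := by intro t; simp [Bw]
  have hBw1 : ∀ t : ℝ, Bw t 1 = t := by intro t; simp [Bw]
  have hsum : ∀ t : ℝ,
      (∑ y : Fin N → Fin 2, ind w1 w0 γ th y * K * ∏ i, Bw (Function.update ρ j t i) (y i))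
      = ∑ g : {k : Fin N // k ≠ j} → Fin 2,
          (ind w1 w0 γ th (e (0, g)) * (1 - t) + ind w1 w0 γ th (e (1, g)) * t) *
            (K * ∏ i ∈ univ.erase j, Bw (ρ i) (e (0, g) i)) := by
    intro t
    rw [← Equiv.sum_comp e
      (fun y => ind w1 w0 γ th y * K * ∏ i, Bw (Function.update ρ j t i) (y i)),
      Fintype.sum_prod_type, Finset.sum_comm]
    refine Finset.sum_congr rfl fun g _ => ?_
    have hprod : ∀ c : Fin 2, (∏ i, Bw (Function.update ρ j t i) (e (c, g) i))
        = Bw t c * ∏ i ∈ univ.erase j, Bw (ρ i) (e (0, g) i) := by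
      intro c
      rw [← Finset.mul_prod_erase univ _ (Finset.mem_univ j)]
      congr 1
      · rw [Function.update_self]
        congr 1
        simp [he, Equiv.piSplitAt_symm_apply]
      · refine Finset.prod_congr rfl fun i hi => ?_
        have hij : i ≠ j := (Finset.mem_erase.mp hi).1
        rw [Function.update_of_ne hij]
        congr 1
        simp [he, Equiv.piSplitAt_symm_apply, hij]
    rw [Fin.sum_univ_two, hprod 0, hprod 1, hBw0, hBw1]
    ring
  rw [hsum a, hsum b]
  refine Finset.sum_le_sum fun g _ => ?_
  have hR0 : 0 ≤ ∏ i ∈ univ.erase j, Bw (ρ i) (e (0, g) i) :=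
    Finset.prod_nonneg fun i _ => Bw_nonneg (hρ i) _
  have hIle : ind w1 w0 γ th (e (0, g)) ≤ ind w1 w0 γ th (e (1, g)) := by
    refine ind_mono w1 w0 γ hw th _ _ fun i => ?_
    by_cases hij : i = j
    · subst hij
      simp [he, Equiv.piSplitAt_symm_apply]
    · simp [he, Equiv.piSplitAt_symm_apply, hij]
  have h1 : ind w1 w0 γ th (e (0, g)) * (1 - a) + ind w1 w0 γ th (e (1, g)) * a
      ≤ ind w1 w0 γ th (e (0, g)) * (1 - b) + ind w1 w0 γ th (e (1, g)) * b := by nlinarith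
  exact mul_le_mul_of_nonneg_right h1 (mul_nonneg hK0 hR0)

lemma G_mono (L : Finset (Fin N)) (w1 w0 γ τL τM : ℝ) (hw : 0 ≤ w1 + w0)
    (hτL : τL ∈ Set.Icc (0 : ℝ) 1) (hτM : τM ∈ Set.Icc (0 : ℝ) 1)
    (ρ₁ ρ₂ : Fin N → ℝ) (h1 : ∀ i, ρ₁ i ∈ Set.Icc (0 : ℝ) 1)
    (h2 : ∀ i, ρ₂ i ∈ Set.Icc (0 : ℝ) 1) (hle : ∀ i, ρ₁ i ≤ ρ₂ i) :
    G L w1 w0 γ τL τM ρ₁ ≤ G L w1 w0 γ τL τM ρ₂ := by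
  classical
  have key : ∀ S : Finset (Fin N),
      G L w1 w0 γ τL τM ρ₁ ≤ G L w1 w0 γ τL τM (fun i => if i ∈ S then ρ₂ i else ρ₁ i) := by
    intro S
    induction S using Finset.induction_on with
    | empty => simp
    | @insert j S hjS ih =>
      set f : Fin N → ℝ := fun i => if i ∈ S then ρ₂ i else ρ₁ i with hf
      have hfI : ∀ i, f i ∈ Set.Icc (0 : ℝ) 1 := by
        intro i; by_cases h : i ∈ S <;> simp [hf, h, h1 i, h2 i]
      have heq1 : (fun i => if i ∈ insert j S then ρ₂ i else ρ₁ i)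
          = Function.update f j (ρ₂ j) := by
        funext i
        by_cases h : i = j
        · subst h; simp [hf]
        · simp [hf, Function.update_of_ne h, h]
      have heq0 : f = Function.update f j (ρ₁ j) := by
        funext i
        by_cases h : i = j
        · subst h; simp [hf, hjS]
        · simp [Function.update_of_ne h]
      rw [heq1]
      refine le_trans ih ?_
      nth_rewrite 1 [heq0]
      exact G_update_le L w1 w0 γ τL τM hw hτL hτM f hfI j (ρ₁ j) (ρ₂ j) (h1 j) (h2 j) (hle j)
  have := key Finset.univ
  simpa using this

lemma falseAlarmProb_eq_G (L M : Finset (Fin N)) (w1 w0 γ τL τM q r : ℝ)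
    (hLM : Disjoint L M) (hUnion : L ∪ M = Finset.univ) :
    falseAlarmProb N L M w1 w0 γ τL τM q r
      = G L w1 w0 γ τL τM (fun i => if i ∈ L then q else r) := by
  unfold falseAlarmProb G
  refine Finset.sum_congr rfl fun th _ => Finset.sum_congr rfl fun y _ => ?_
  rw [mul_assoc, mul_assoc]
  congr 1
  rw [show (Finset.univ : Finset (Fin N)) = L ∪ M from hUnion.symm,
    Finset.prod_union hLM, Finset.prod_union hLM, mul_mul_mul_comm,
    ← Finset.prod_mul_distrib, ← Finset.prod_mul_distrib]
  congr 1
  · refine Finset.prod_congr rfl fun i hi => ?_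
    simp [Aw, Bw, hi]
  · refine Finset.prod_congr rfl fun i hi => ?_
    have hiL : i ∉ L := Finset.disjoint_right.mp hLM hi
    simp [Aw, Bw, hiL]

end FalseAlarmAux

/-- False-alarm half of Lemma 1 of the paper: the fusion center's false-alarm probability is
nondecreasing in the malicious robots' effective false-alarm probability `r = P_FA,M`; in
particular it is maximized at `r = 1`. -/
theorem falseAlarmProb_monotone
    (N : ℕ) (hN : 1 ≤ N) (L M : Finset (Fin N))
    (hLM : Disjoint L M) (hUnion : L ∪ M = Finset.univ)
    (w1 w0 γ : ℝ) (hw1 : 0 < w1) (hw0 : 0 < w0)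
    (τL τM q : ℝ) (hτL : τL ∈ Set.Icc (0 : ℝ) 1) (hτM : τM ∈ Set.Icc (0 : ℝ) 1)
    (hq : q ∈ Set.Icc (0 : ℝ) 1) :
    (∀ r ∈ Set.Icc (0 : ℝ) 1, ∀ r' ∈ Set.Icc (0 : ℝ) 1, r ≤ r' →
        falseAlarmProb N L M w1 w0 γ τL τM q r ≤ falseAlarmProb N L M w1 w0 γ τL τM q r') ∧
    (∀ r ∈ Set.Icc (0 : ℝ) 1,
        falseAlarmProb N L M w1 w0 γ τL τM q r ≤ falseAlarmProb N L M w1 w0 γ τL τM q 1) := by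
  have hw : 0 ≤ w1 + w0 := by linarith
  have main : ∀ r ∈ Set.Icc (0 : ℝ) 1, ∀ r' ∈ Set.Icc (0 : ℝ) 1, r ≤ r' →
      falseAlarmProb N L M w1 w0 γ τL τM q r ≤ falseAlarmProb N L M w1 w0 γ τL τM q r' := by
    intro r hr r' hr' hrr'
    rw [FalseAlarmAux.falseAlarmProb_eq_G L M w1 w0 γ τL τM q r hLM hUnion,
      FalseAlarmAux.falseAlarmProb_eq_G L M w1 w0 γ τL τM q r' hLM hUnion]
    refine FalseAlarmAux.G_mono L w1 w0 γ τL τM hw hτL hτM _ _ ?_ ?_ ?_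
    · intro i; by_cases h : i ∈ L <;> simp [h, hq, hr]
    · intro i; by_cases h : i ∈ L <;> simp [h, hq, hr']
    · intro i; by_cases h : i ∈ L <;> simp [h, hrr']
  exact ⟨main, fun r hr => main r hr 1 (by constructor <;> norm_num) hr.2⟩
end

section
/- Let N ≥ 1, let Fin N be partitioned into disjoint sets L and M, let w_1 > 0, w_0 > 0, γ ∈ ℝ, and τ_L, τ_M, q ∈ [0,1]. For r ∈ [0,1] define P_MD(r) := ∑_{t̂ ∈ {0,1}^N} ∑_{y ∈ {0,1}^N} 𝟙[ ∑_{i=1}^N t̂_i (w_1 y_i − w_0 (1 − y_i)) < γ ] · ∏_{i ∈ L} τ_L^{t̂_i}(1−τ_L)^{1−t̂_i} (1−q)^{y_i} q^{1−y_i} · ∏_{i ∈ M} τ_M^{t̂_i}(1−τ_M)^{1−t̂_i} (1−r)^{y_i} r^{1−y_i}. Then P_MD is nondecreasing on [0,1]; in particular P_MD(r) ≤ P_MD(1) for every r ∈ [0,1]. -/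
/-- The fusion center's missed-detection probability under hypothesis `H₁`: robot `i` is
trusted (`t̂ i = 1`) with probability `τL` if legitimate (`i ∈ L`) and `τM` if malicious
(`i ∈ M`); it reports bit `0` with probability `q` if legitimate and `r` if malicious; the
event is missed when the trusted weighted statistic `∑ t̂ i * (w1 * y i - w0 * (1 - y i))`
falls below the threshold `γ`. -/
noncomputable def missedDetectionProb (N : ℕ) (L M : Finset (Fin N))
    (w1 w0 γ τL τM q r : ℝ) : ℝ :=
  ∑ th : Fin N → Fin 2, ∑ y : Fin N → Fin 2,
    (if (∑ i, ((th i : ℕ) : ℝ) *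
        (w1 * ((y i : ℕ) : ℝ) - w0 * (1 - ((y i : ℕ) : ℝ)))) < γ then (1 : ℝ) else 0) *
    (∏ i ∈ L, τL ^ (th i : ℕ) * (1 - τL) ^ (1 - (th i : ℕ)) *
        ((1 - q) ^ (y i : ℕ) * q ^ (1 - (y i : ℕ)))) *
    ∏ i ∈ M, τM ^ (th i : ℕ) * (1 - τM) ^ (1 - (th i : ℕ)) *
        ((1 - r) ^ (y i : ℕ) * r ^ (1 - (y i : ℕ)))

/-- Auxiliary: the same quantity where each malicious robot `i` has its own
probability `rv i` of reporting bit `0`. -/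
private noncomputable def gAux (N : ℕ) (L M : Finset (Fin N))
    (w1 w0 γ τL τM q : ℝ) (rv : Fin N → ℝ) : ℝ :=
  ∑ th : Fin N → Fin 2, ∑ y : Fin N → Fin 2,
    (if (∑ i, ((th i : ℕ) : ℝ) *
        (w1 * ((y i : ℕ) : ℝ) - w0 * (1 - ((y i : ℕ) : ℝ)))) < γ then (1 : ℝ) else 0) *
    (∏ i ∈ L, τL ^ (th i : ℕ) * (1 - τL) ^ (1 - (th i : ℕ)) *
        ((1 - q) ^ (y i : ℕ) * q ^ (1 - (y i : ℕ)))) *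
    ∏ i ∈ M, τM ^ (th i : ℕ) * (1 - τM) ^ (1 - (th i : ℕ)) *
        ((1 - rv i) ^ (y i : ℕ) * (rv i) ^ (1 - (y i : ℕ)))

private lemma fin2cases (b : Fin 2) : b = 0 ∨ b = 1 := by
  rcases b with ⟨v, hv⟩
  interval_cases v
  · exact Or.inl rfl
  · exact Or.inr rfl

private lemma gAux_const (N : ℕ) (L M : Finset (Fin N)) (w1 w0 γ τL τM q r : ℝ) :
    gAux N L M w1 w0 γ τL τM q (fun _ => r) =
      missedDetectionProb N L M w1 w0 γ τL τM q r := rfl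

private lemma gAux_congr (N : ℕ) (L M : Finset (Fin N)) (w1 w0 γ τL τM q : ℝ)
    {rv rv' : Fin N → ℝ} (h : ∀ i ∈ M, rv i = rv' i) :
    gAux N L M w1 w0 γ τL τM q rv = gAux N L M w1 w0 γ τL τM q rv' := by
  unfold gAux
  refine Finset.sum_congr rfl fun th _ => Finset.sum_congr rfl fun y _ => ?_
  congr 1
  exact Finset.prod_congr rfl fun i hi => by rw [h i hi]

/-- Core coupling lemma: if `D` is nonnegative and flipping coordinate `j` to `0`
does not decrease `D`, then the `D`-weighted Bernoulli average is nondecreasing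
in the probability `t` that coordinate `j` equals `0`. -/
private lemma core_mono {N : ℕ} (D : (Fin N → Fin 2) → ℝ) (j : Fin N)
    (hD0 : ∀ y, 0 ≤ D y) (hDm : ∀ y, D y ≤ D (Function.update y j 0))
    {t t' : ℝ} (htt' : t ≤ t') :
    ∑ y : Fin N → Fin 2, D y * ((1 - t) ^ ((y j : ℕ)) * t ^ (1 - (y j : ℕ)))
      ≤ ∑ y : Fin N → Fin 2, D y * ((1 - t') ^ ((y j : ℕ)) * t' ^ (1 - (y j : ℕ))) := by
  classical
  set A0 := Finset.univ.filter (fun y : Fin N → Fin 2 => y j = 0) with hA0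
  set A1 := Finset.univ.filter (fun y : Fin N → Fin 2 => ¬ y j = 0) with hA1
  have key : ∀ s : ℝ,
      ∑ y : Fin N → Fin 2, D y * ((1 - s) ^ ((y j : ℕ)) * s ^ (1 - (y j : ℕ)))
        = s * (∑ y ∈ A0, D y) + (1 - s) * (∑ y ∈ A1, D y) := by
    intro s
    rw [← Finset.sum_filter_add_sum_filter_not Finset.univ
      (fun y : Fin N → Fin 2 => y j = 0)
      (fun y => D y * ((1 - s) ^ ((y j : ℕ)) * s ^ (1 - (y j : ℕ)))),
      Finset.mul_sum, Finset.mul_sum]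
    congr 1
    · refine Finset.sum_congr rfl fun y hy => ?_
      have h : y j = 0 := (Finset.mem_filter.mp hy).2
      rw [h]
      simp
      ring
    · refine Finset.sum_congr rfl fun y hy => ?_
      have h0 : ¬ y j = 0 := (Finset.mem_filter.mp hy).2
      have h : y j = 1 := (fin2cases (y j)).resolve_left h0
      rw [h]
      simp
      ring
  have hS : (∑ y ∈ A1, D y) ≤ ∑ y ∈ A0, D y := by
    have hinj : ∀ y ∈ A1, ∀ y' ∈ A1,
        Function.update y j (0 : Fin 2) = Function.update y' j 0 → y = y' := by
      intro y hy y' hy' h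
      have h1 : y j = 1 := (fin2cases (y j)).resolve_left (Finset.mem_filter.mp hy).2
      have h1' : y' j = 1 := (fin2cases (y' j)).resolve_left (Finset.mem_filter.mp hy').2
      funext i
      by_cases hij : i = j
      · subst hij; rw [h1, h1']
      · have := congrFun h i
        rwa [Function.update_of_ne hij, Function.update_of_ne hij] at this
    calc (∑ y ∈ A1, D y) ≤ ∑ y ∈ A1, D (Function.update y j 0) :=
          Finset.sum_le_sum fun y _ => hDm y
      _ = ∑ z ∈ A1.image (fun y => Function.update y j (0 : Fin 2)), D z :=
          (Finset.sum_image hinj).symm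
      _ ≤ ∑ z ∈ A0, D z := by
          refine Finset.sum_le_sum_of_subset_of_nonneg ?_ fun z _ _ => hD0 z
          intro z hz
          simp only [Finset.mem_image] at hz
          obtain ⟨y, _, rfl⟩ := hz
          simp [hA0, Function.update_self]
  rw [key t, key t']
  nlinarith [hS, htt']

/-- Monotonicity of `gAux` in a single malicious coordinate. -/
private lemma gAux_update_mono (N : ℕ) (L M : Finset (Fin N))
    (w1 w0 γ τL τM q : ℝ) (hw1 : 0 < w1) (hw0 : 0 < w0)
    (hτL : τL ∈ Set.Icc (0 : ℝ) 1) (hτM : τM ∈ Set.Icc (0 : ℝ) 1)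
    (hq : q ∈ Set.Icc (0 : ℝ) 1)
    (rv : Fin N → ℝ) (hrv : ∀ i, rv i ∈ Set.Icc (0 : ℝ) 1)
    (j : Fin N) (hjM : j ∈ M) (hjL : j ∉ L)
    {t t' : ℝ} (htt' : t ≤ t') :
    gAux N L M w1 w0 γ τL τM q (Function.update rv j t)
      ≤ gAux N L M w1 w0 γ τL τM q (Function.update rv j t') := by
  classical
  unfold gAux
  refine Finset.sum_le_sum fun th _ => ?_
  set D : (Fin N → Fin 2) → ℝ := fun y =>
    (if (∑ i, ((th i : ℕ) : ℝ) *
        (w1 * ((y i : ℕ) : ℝ) - w0 * (1 - ((y i : ℕ) : ℝ)))) < γ then (1 : ℝ) else 0) *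
    (∏ i ∈ L, τL ^ (th i : ℕ) * (1 - τL) ^ (1 - (th i : ℕ)) *
        ((1 - q) ^ (y i : ℕ) * q ^ (1 - (y i : ℕ)))) *
    ((τM ^ (th j : ℕ) * (1 - τM) ^ (1 - (th j : ℕ))) *
      ∏ i ∈ M.erase j, τM ^ (th i : ℕ) * (1 - τM) ^ (1 - (th i : ℕ)) *
        ((1 - rv i) ^ (y i : ℕ) * (rv i) ^ (1 - (y i : ℕ)))) with hD
  have hrw : ∀ (s : ℝ) (y : Fin N → Fin 2),
      (if (∑ i, ((th i : ℕ) : ℝ) *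
          (w1 * ((y i : ℕ) : ℝ) - w0 * (1 - ((y i : ℕ) : ℝ)))) < γ then (1 : ℝ) else 0) *
      (∏ i ∈ L, τL ^ (th i : ℕ) * (1 - τL) ^ (1 - (th i : ℕ)) *
          ((1 - q) ^ (y i : ℕ) * q ^ (1 - (y i : ℕ)))) *
      (∏ i ∈ M, τM ^ (th i : ℕ) * (1 - τM) ^ (1 - (th i : ℕ)) *
          ((1 - Function.update rv j s i) ^ (y i : ℕ) *
            (Function.update rv j s i) ^ (1 - (y i : ℕ))))
        = D y * ((1 - s) ^ ((y j : ℕ)) * s ^ (1 - (y j : ℕ))) := by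
    intro s y
    rw [← Finset.mul_prod_erase M _ hjM]
    have hprod : ∀ i ∈ M.erase j,
        τM ^ (th i : ℕ) * (1 - τM) ^ (1 - (th i : ℕ)) *
          ((1 - Function.update rv j s i) ^ (y i : ℕ) *
            (Function.update rv j s i) ^ (1 - (y i : ℕ)))
        = τM ^ (th i : ℕ) * (1 - τM) ^ (1 - (th i : ℕ)) *
          ((1 - rv i) ^ (y i : ℕ) * (rv i) ^ (1 - (y i : ℕ))) := by
      intro i hi
      rw [Function.update_of_ne (Finset.ne_of_mem_erase hi)]
    rw [Finset.prod_congr rfl hprod, Function.update_self, hD]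
    ring
  have hPLnn : ∀ y : Fin N → Fin 2,
      0 ≤ ∏ i ∈ L, τL ^ (th i : ℕ) * (1 - τL) ^ (1 - (th i : ℕ)) *
        ((1 - q) ^ (y i : ℕ) * q ^ (1 - (y i : ℕ))) := by
    intro y
    refine Finset.prod_nonneg fun i _ => ?_
    have := hτL.1; have := hτL.2; have := hq.1; have := hq.2
    apply mul_nonneg (mul_nonneg (pow_nonneg hτL.1 _)
      (pow_nonneg (by linarith [hτL.2]) _))
    exact mul_nonneg (pow_nonneg (by linarith [hq.2]) _) (pow_nonneg hq.1 _)
  have hRest : ∀ y : Fin N → Fin 2,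
      0 ≤ (τM ^ (th j : ℕ) * (1 - τM) ^ (1 - (th j : ℕ))) *
        ∏ i ∈ M.erase j, τM ^ (th i : ℕ) * (1 - τM) ^ (1 - (th i : ℕ)) *
          ((1 - rv i) ^ (y i : ℕ) * (rv i) ^ (1 - (y i : ℕ))) := by
    intro y
    apply mul_nonneg (mul_nonneg (pow_nonneg hτM.1 _)
      (pow_nonneg (by linarith [hτM.2]) _))
    refine Finset.prod_nonneg fun i _ => ?_
    apply mul_nonneg (mul_nonneg (pow_nonneg hτM.1 _)
      (pow_nonneg (by linarith [hτM.2]) _))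
    exact mul_nonneg (pow_nonneg (by linarith [(hrv i).2]) _)
      (pow_nonneg (hrv i).1 _)
  have hD0 : ∀ y, 0 ≤ D y := by
    intro y
    rw [hD]
    apply mul_nonneg (mul_nonneg _ (hPLnn y)) (hRest y)
    split_ifs <;> norm_num
  have hDm : ∀ y, D y ≤ D (Function.update y j 0) := by
    intro y
    have hLeq : (∏ i ∈ L, τL ^ (th i : ℕ) * (1 - τL) ^ (1 - (th i : ℕ)) *
          ((1 - q) ^ ((Function.update y j 0 i : ℕ)) * q ^ (1 - ((Function.update y j 0 i : ℕ)))))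
        = ∏ i ∈ L, τL ^ (th i : ℕ) * (1 - τL) ^ (1 - (th i : ℕ)) *
          ((1 - q) ^ (y i : ℕ) * q ^ (1 - (y i : ℕ))) := by
      refine Finset.prod_congr rfl fun i hi => ?_
      rw [Function.update_of_ne (by rintro rfl; exact hjL hi)]
    have hMeq : (∏ i ∈ M.erase j, τM ^ (th i : ℕ) * (1 - τM) ^ (1 - (th i : ℕ)) *
          ((1 - rv i) ^ ((Function.update y j 0 i : ℕ)) *
            (rv i) ^ (1 - ((Function.update y j 0 i : ℕ)))))
        = ∏ i ∈ M.erase j, τM ^ (th i : ℕ) * (1 - τM) ^ (1 - (th i : ℕ)) *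
          ((1 - rv i) ^ (y i : ℕ) * (rv i) ^ (1 - (y i : ℕ))) := by
      refine Finset.prod_congr rfl fun i hi => ?_
      rw [Function.update_of_ne (Finset.ne_of_mem_erase hi)]
    have hstat : (∑ i, ((th i : ℕ) : ℝ) *
          (w1 * ((Function.update y j 0 i : ℕ) : ℝ)
            - w0 * (1 - ((Function.update y j 0 i : ℕ) : ℝ))))
        ≤ ∑ i, ((th i : ℕ) : ℝ) *
          (w1 * ((y i : ℕ) : ℝ) - w0 * (1 - ((y i : ℕ) : ℝ))) := by
      refine Finset.sum_le_sum fun i _ => ?_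
      by_cases hij : i = j
      · subst hij
        rw [Function.update_self]
        have h1 : (0 : ℝ) ≤ ((th i : ℕ) : ℝ) := Nat.cast_nonneg _
        have h2 : (0 : ℝ) ≤ ((y i : ℕ) : ℝ) := Nat.cast_nonneg _
        simp only [Fin.val_zero, Nat.cast_zero]
        nlinarith [mul_nonneg (mul_nonneg h1 h2) (by linarith : (0:ℝ) ≤ w1 + w0)]
      · rw [Function.update_of_ne hij]
    have hInd : (if (∑ i, ((th i : ℕ) : ℝ) *
          (w1 * ((y i : ℕ) : ℝ) - w0 * (1 - ((y i : ℕ) : ℝ)))) < γ then (1 : ℝ) else 0)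
        ≤ (if (∑ i, ((th i : ℕ) : ℝ) *
          (w1 * ((Function.update y j 0 i : ℕ) : ℝ)
            - w0 * (1 - ((Function.update y j 0 i : ℕ) : ℝ)))) < γ then (1 : ℝ) else 0) := by
      split_ifs with ha hb hb
      · exact le_refl _
      · exact absurd (lt_of_le_of_lt hstat ha) hb
      · norm_num
      · exact le_refl _
    rw [hD]
    simp only [hLeq, hMeq]
    exact mul_le_mul_of_nonneg_right
      (mul_le_mul_of_nonneg_right hInd (hPLnn y)) (hRest y)
  calc (∑ y : Fin N → Fin 2,
        (if (∑ i, ((th i : ℕ) : ℝ) *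
            (w1 * ((y i : ℕ) : ℝ) - w0 * (1 - ((y i : ℕ) : ℝ)))) < γ then (1 : ℝ) else 0) *
        (∏ i ∈ L, τL ^ (th i : ℕ) * (1 - τL) ^ (1 - (th i : ℕ)) *
            ((1 - q) ^ (y i : ℕ) * q ^ (1 - (y i : ℕ)))) *
        (∏ i ∈ M, τM ^ (th i : ℕ) * (1 - τM) ^ (1 - (th i : ℕ)) *
            ((1 - Function.update rv j t i) ^ (y i : ℕ) *
              (Function.update rv j t i) ^ (1 - (y i : ℕ)))))
      = ∑ y : Fin N → Fin 2, D y * ((1 - t) ^ ((y j : ℕ)) * t ^ (1 - (y j : ℕ))) :=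
        Finset.sum_congr rfl fun y _ => hrw t y
    _ ≤ ∑ y : Fin N → Fin 2, D y * ((1 - t') ^ ((y j : ℕ)) * t' ^ (1 - (y j : ℕ))) :=
        core_mono D j hD0 hDm htt'
    _ = _ := (Finset.sum_congr rfl fun y _ => hrw t' y).symm

/-- Missed-detection half of Lemma 1 of the paper: the fusion center's missed-detection
probability is nondecreasing in the malicious robots' effective missed-detection probability
`r = P_MD,M`; in particular it is maximized at `r = 1`. -/
theorem missedDetectionProb_monotone
    (N : ℕ) (hN : 1 ≤ N) (L M : Finset (Fin N))
    (hLM : Disjoint L M) (hUnion : L ∪ M = Finset.univ)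
    (w1 w0 γ : ℝ) (hw1 : 0 < w1) (hw0 : 0 < w0)
    (τL τM q : ℝ) (hτL : τL ∈ Set.Icc (0 : ℝ) 1) (hτM : τM ∈ Set.Icc (0 : ℝ) 1)
    (hq : q ∈ Set.Icc (0 : ℝ) 1) :
    (∀ r ∈ Set.Icc (0 : ℝ) 1, ∀ r' ∈ Set.Icc (0 : ℝ) 1, r ≤ r' →
        missedDetectionProb N L M w1 w0 γ τL τM q r
          ≤ missedDetectionProb N L M w1 w0 γ τL τM q r') ∧
    (∀ r ∈ Set.Icc (0 : ℝ) 1,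
        missedDetectionProb N L M w1 w0 γ τL τM q r
          ≤ missedDetectionProb N L M w1 w0 γ τL τM q 1) := by
  classical
  have main : ∀ r ∈ Set.Icc (0 : ℝ) 1, ∀ r' ∈ Set.Icc (0 : ℝ) 1, r ≤ r' →
      missedDetectionProb N L M w1 w0 γ τL τM q r
        ≤ missedDetectionProb N L M w1 w0 γ τL τM q r' := by
    intro r hr r' hr' hrr'
    have key : ∀ S : Finset (Fin N), S ⊆ M →
        gAux N L M w1 w0 γ τL τM q (fun _ => r)
          ≤ gAux N L M w1 w0 γ τL τM q (fun i => if i ∈ S then r' else r) := by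
      intro S
      induction S using Finset.induction_on with
      | empty =>
        intro _
        have : (fun i : Fin N => if i ∈ (∅ : Finset (Fin N)) then r' else r)
            = fun _ : Fin N => r := by
          funext i; simp
        rw [this]
      | @insert j S hjS ih =>
        intro hsub
        have hjM : j ∈ M := hsub (Finset.mem_insert_self j S)
        have hjL : j ∉ L := fun hL => (Finset.disjoint_left.mp hLM hL) hjM
        have hSsub : S ⊆ M := fun i hi => hsub (Finset.mem_insert_of_mem hi)
        refine le_trans (ih hSsub) ?_
        have hrvIcc : ∀ i, (if i ∈ S then r' else r) ∈ Set.Icc (0 : ℝ) 1 := by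
          intro i; split_ifs
          · exact hr'
          · exact hr
        have h1 : (fun i : Fin N => if i ∈ S then r' else r)
            = Function.update (fun i : Fin N => if i ∈ S then r' else r) j r := by
          funext i
          by_cases hij : i = j
          · subst hij; rw [Function.update_self]; simp [hjS]
          · rw [Function.update_of_ne hij]
        have h2 : (fun i : Fin N => if i ∈ insert j S then r' else r)
            = Function.update (fun i : Fin N => if i ∈ S then r' else r) j r' := by
          funext i
          by_cases hij : i = j
          · subst hij; rw [Function.update_self]; simp
          · rw [Function.update_of_ne hij]
            simp [Finset.mem_insert, hij]
        rw [h1]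
        conv_rhs => rw [h2]
        exact gAux_update_mono N L M w1 w0 γ τL τM q hw1 hw0 hτL hτM hq
          _ hrvIcc j hjM hjL hrr'
      
    have h3 := key M (le_refl M)
    have h4 : gAux N L M w1 w0 γ τL τM q (fun i => if i ∈ M then r' else r)
        = gAux N L M w1 w0 γ τL τM q (fun _ => r') :=
      gAux_congr N L M w1 w0 γ τL τM q fun i hi => by simp [hi]
    rw [h4] at h3
    rw [← gAux_const, ← gAux_const]
    exact h3
  refine ⟨main, fun r hr => main r hr 1 ⟨zero_le_one, le_refl 1⟩ hr.2⟩
end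

section
/- Let T be a finite set (the trusted robots), w_1 > 0, w_0 > 0, γ ∈ ℝ, and q ∈ [0,1]. For a subset M ⊆ T define FA(M) := ∑_{y : (T∖M) → {0,1}} 𝟙[ |M|·w_1 + ∑_{i ∈ T∖M} (w_1 y_i − w_0(1 − y_i)) ≥ γ ] · ∏_{i ∈ T∖M} q^{y_i}(1−q)^{1−y_i}. Then FA is monotone with respect to inclusion: if M ⊆ M' ⊆ T, then FA(M) ≤ FA(M'). -/
/-- Conditional false-alarm probability of the fusion center given the set `T` of trusted
robots, when the trusted malicious robots `M ⊆ T` each deterministically contribute `+w1`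
(worst case `P_FA,M = 1`) and each trusted legitimate robot `i ∈ T \ M` independently
reports bit `1` with probability `q`, contributing `w1 * y i - w0 * (1 - y i)`. -/
noncomputable def condFalseAlarm {ι : Type*} [DecidableEq ι]
    (T M : Finset ι) (w1 w0 γ q : ℝ) : ℝ :=
  ∑ y : {i // i ∈ T \ M} → Fin 2,
    (if γ ≤ (M.card : ℝ) * w1 +
        ∑ i : {i // i ∈ T \ M},
          (w1 * ((y i : ℕ) : ℝ) - w0 * (1 - ((y i : ℕ) : ℝ))) then (1 : ℝ) else 0) *
    ∏ i : {i // i ∈ T \ M}, q ^ (y i : ℕ) * (1 - q) ^ (1 - (y i : ℕ))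

noncomputable def FAaux {ι : Type*} [DecidableEq ι] (w1 w0 γ q : ℝ) (s : Finset ι) (c : ℝ) : ℝ :=
  ∑ y : {i // i ∈ s} → Fin 2,
    (if γ ≤ c + ∑ i : {i // i ∈ s},
          (w1 * ((y i : ℕ) : ℝ) - w0 * (1 - ((y i : ℕ) : ℝ))) then (1 : ℝ) else 0) *
    ∏ i : {i // i ∈ s}, q ^ (y i : ℕ) * (1 - q) ^ (1 - (y i : ℕ))

lemma condFalseAlarm_eq_FAaux {ι : Type*} [DecidableEq ι] (T M : Finset ι)
    (w1 w0 γ q : ℝ) :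
    condFalseAlarm T M w1 w0 γ q = FAaux w1 w0 γ q (T \ M) ((M.card : ℝ) * w1) := rfl

lemma FAaux_mono {ι : Type*} [DecidableEq ι] (w1 w0 γ q : ℝ) (hq0 : 0 ≤ q) (hq1 : q ≤ 1)
    (s : Finset ι) {c c' : ℝ} (h : c ≤ c') :
    FAaux w1 w0 γ q s c ≤ FAaux w1 w0 γ q s c' := by
  apply Finset.sum_le_sum
  intro y _
  have hp : (0:ℝ) ≤ ∏ i : {i // i ∈ s}, q ^ (y i : ℕ) * (1 - q) ^ (1 - (y i : ℕ)) :=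
    Finset.prod_nonneg fun i _ =>
      mul_nonneg (pow_nonneg hq0 _) (pow_nonneg (by linarith) _)
  apply mul_le_mul_of_nonneg_right _ hp
  split_ifs with h1 h2
  · exact le_refl 1
  · exact absurd (h1.trans (by linarith)) h2
  · norm_num
  · exact le_refl 0

lemma FAaux_insert {ι : Type*} [DecidableEq ι] (w1 w0 γ q : ℝ)
    {a : ι} {s : Finset ι} (ha : a ∉ s) (c : ℝ) :
    FAaux w1 w0 γ q (insert a s) c
      = q * FAaux w1 w0 γ q s (c + w1) + (1 - q) * FAaux w1 w0 γ q s (c - w0) := by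
  classical
  set e := Finset.subtypeInsertEquivOption ha with he
  set E : ({i // i ∈ insert a s} → Fin 2) ≃ (Fin 2 × ({i // i ∈ s} → Fin 2)) :=
    (Equiv.arrowCongr e (Equiv.refl (Fin 2))).trans
      (Equiv.piOptionEquivProd (β := fun _ => Fin 2)) with hE
  rw [FAaux, ← Equiv.sum_comp E.symm]
  rw [Fintype.sum_prod_type, Fin.sum_univ_two]
  have hval : ∀ (b : Fin 2) (y : {i // i ∈ s} → Fin 2) (i : {i // i ∈ insert a s}),
      E.symm (b, y) i = if h : (i : ι) = a then b else
        y ⟨i, (Finset.mem_insert.mp i.2).resolve_left h⟩ := by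
    intro b y i
    by_cases h : (i : ι) = a <;>
      simp [hE, he, Equiv.piOptionEquivProd, Finset.subtypeInsertEquivOption, h]
  have hsum : ∀ (b : Fin 2) (y : {i // i ∈ s} → Fin 2),
      (∑ i : {i // i ∈ insert a s},
        (w1 * ((E.symm (b, y) i : ℕ) : ℝ) - w0 * (1 - ((E.symm (b, y) i : ℕ) : ℝ))))
      = (w1 * ((b : ℕ) : ℝ) - w0 * (1 - ((b : ℕ) : ℝ)))
        + ∑ i : {i // i ∈ s}, (w1 * ((y i : ℕ) : ℝ) - w0 * (1 - ((y i : ℕ) : ℝ))) := by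
    intro b y
    rw [← Equiv.sum_comp e.symm, Fintype.sum_option]
    congr 1
    · rw [hval]; simp [he, Finset.subtypeInsertEquivOption]
    · apply Finset.sum_congr rfl
      intro i _
      have hne : (i : ι) ≠ a := fun hh => ha (hh ▸ i.2)
      rw [hval]
      simp [he, Finset.subtypeInsertEquivOption, hne]
  have hprod : ∀ (b : Fin 2) (y : {i // i ∈ s} → Fin 2),
      (∏ i : {i // i ∈ insert a s},
        q ^ (E.symm (b, y) i : ℕ) * (1 - q) ^ (1 - (E.symm (b, y) i : ℕ)))
      = (q ^ (b : ℕ) * (1 - q) ^ (1 - (b : ℕ)))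
        * ∏ i : {i // i ∈ s}, q ^ (y i : ℕ) * (1 - q) ^ (1 - (y i : ℕ)) := by
    intro b y
    rw [← Equiv.prod_comp e.symm, Fintype.prod_option]
    congr 1
    · rw [hval]; simp [he, Finset.subtypeInsertEquivOption]
    · apply Finset.prod_congr rfl
      intro i _
      have hne : (i : ι) ≠ a := fun hh => ha (hh ▸ i.2)
      rw [hval]
      simp [he, Finset.subtypeInsertEquivOption, hne]
  simp only [hsum, hprod, Fin.val_zero, Fin.val_one, Nat.cast_zero, Nat.cast_one,
    pow_zero, pow_one, mul_one, mul_zero, one_mul, sub_zero, zero_sub, sub_self]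
  rw [FAaux, FAaux, Finset.mul_sum, Finset.mul_sum, add_comm]
  congr 1
  · apply Finset.sum_congr rfl
    intro y _
    rw [← add_assoc, Nat.sub_self, pow_zero, mul_one, mul_left_comm]
  · apply Finset.sum_congr rfl
    intro y _
    rw [← add_assoc, ← sub_eq_add_neg, Nat.sub_zero, pow_one, mul_left_comm]

lemma condFalseAlarm_insert_step {ι : Type*} [DecidableEq ι]
    (T M : Finset ι) {a : ι} (haT : a ∈ T) (haM : a ∉ M)
    (w1 w0 γ : ℝ) (hw1 : 0 < w1) (hw0 : 0 < w0)
    (q : ℝ) (hq0 : 0 ≤ q) (hq1 : q ≤ 1) :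
    condFalseAlarm T M w1 w0 γ q ≤ condFalseAlarm T (insert a M) w1 w0 γ q := by
  have ha' : a ∉ T \ insert a M := by simp
  have hTM : T \ M = insert a (T \ insert a M) := by
    rw [Finset.sdiff_insert, Finset.insert_erase (Finset.mem_sdiff.mpr ⟨haT, haM⟩)]
  rw [condFalseAlarm_eq_FAaux, condFalseAlarm_eq_FAaux, hTM,
    FAaux_insert _ _ _ _ ha']
  have hcard : (((insert a M).card : ℕ) : ℝ) = (M.card : ℝ) + 1 := by
    rw [Finset.card_insert_of_notMem haM]; push_cast; ring
  have h1 : (M.card : ℝ) * w1 + w1 = (((insert a M).card : ℕ) : ℝ) * w1 := by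
    rw [hcard]; ring
  have h2 : FAaux w1 w0 γ q (T \ insert a M) ((M.card : ℝ) * w1 - w0)
      ≤ FAaux w1 w0 γ q (T \ insert a M) ((((insert a M).card : ℕ) : ℝ) * w1) :=
    FAaux_mono _ _ _ _ hq0 hq1 _ (by rw [hcard]; nlinarith)
  rw [h1]
  set X := FAaux w1 w0 γ q (T \ insert a M) ((((insert a M).card : ℕ) : ℝ) * w1) with hX
  have h3 : (1 - q) * FAaux w1 w0 γ q (T \ insert a M) ((M.card : ℝ) * w1 - w0)
      ≤ (1 - q) * X := mul_le_mul_of_nonneg_left h2 (by linarith)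
  nlinarith

/-- Monotonicity claim from Lemma 2 of the paper (false-alarm side): with the worst-case
malicious strategy, the conditional false-alarm probability only increases when additional
trusted robots are malicious rather than legitimate, i.e. it is monotone in the set `M` of
trusted malicious robots with respect to inclusion. -/
theorem condFalseAlarm_monotone {ι : Type*} [DecidableEq ι]
    (T M M' : Finset ι) (hMM' : M ⊆ M') (hM'T : M' ⊆ T)
    (w1 w0 γ : ℝ) (hw1 : 0 < w1) (hw0 : 0 < w0)
    (q : ℝ) (hq : q ∈ Set.Icc (0 : ℝ) 1) :
    condFalseAlarm T M w1 w0 γ q ≤ condFalseAlarm T M' w1 w0 γ q := by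
  obtain ⟨hq0, hq1⟩ := hq
  have key : ∀ s : Finset ι, s ⊆ T \ M →
      condFalseAlarm T M w1 w0 γ q ≤ condFalseAlarm T (M ∪ s) w1 w0 γ q := by
    intro s
    induction s using Finset.induction_on with
    | empty => intro _; rw [Finset.union_empty]
    | @insert b t hb ih =>
      intro hsub
      have hbTM : b ∈ T \ M := hsub (Finset.mem_insert_self b t)
      have hbT : b ∈ T := (Finset.mem_sdiff.mp hbTM).1
      have hbM : b ∉ M := (Finset.mem_sdiff.mp hbTM).2
      have htsub : t ⊆ T \ M := fun x hx => hsub (Finset.mem_insert_of_mem hx)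
      have hbMt : b ∉ M ∪ t := by simp [hbM, hb]
      calc condFalseAlarm T M w1 w0 γ q
          ≤ condFalseAlarm T (M ∪ t) w1 w0 γ q := ih htsub
        _ ≤ condFalseAlarm T (insert b (M ∪ t)) w1 w0 γ q :=
            condFalseAlarm_insert_step T (M ∪ t) hbT hbMt w1 w0 γ hw1 hw0 q hq0 hq1
        _ = condFalseAlarm T (M ∪ insert b t) w1 w0 γ q := by
            rw [Finset.union_insert]
  have hdiff : M' \ M ⊆ T \ M :=
    Finset.sdiff_subset_sdiff hM'T (Finset.Subset.refl M)
  have := key (M' \ M) hdiff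
  rwa [Finset.union_sdiff_of_subset hMM'] at this
end

section
/- Let T be a finite set (the trusted robots), w_1 > 0, w_0 > 0, γ ∈ ℝ, and q ∈ [0,1]. For a subset M ⊆ T define MD(M) := ∑_{y : (T∖M) → {0,1}} 𝟙[ −|M|·w_0 + ∑_{i ∈ T∖M} (w_1 y_i − w_0(1 − y_i)) < γ ] · ∏_{i ∈ T∖M} (1−q)^{y_i} q^{1−y_i}. Then MD is monotone with respect to inclusion: if M ⊆ M' ⊆ T, then MD(M) ≤ MD(M'). -/
/-- Conditional missed-detection probability of the fusion center given the set `T` of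
trusted robots, when the trusted malicious robots `M ⊆ T` each deterministically contribute
`-w0` (worst case `P_MD,M = 1`, reporting bit `0`) and each trusted legitimate robot
`i ∈ T \ M` independently reports bit `0` with probability `q` (contributing `-w0`) and bit
`1` otherwise (contributing `+w1`). -/
noncomputable def condMissedDetection {ι : Type*} [DecidableEq ι]
    (T M : Finset ι) (w1 w0 γ q : ℝ) : ℝ :=
  ∑ y : {i // i ∈ T \ M} → Fin 2,
    (if (-(M.card : ℝ) * w0 +
        ∑ i : {i // i ∈ T \ M},
          (w1 * ((y i : ℕ) : ℝ) - w0 * (1 - ((y i : ℕ) : ℝ)))) < γ then (1 : ℝ) else 0) *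
    ∏ i : {i // i ∈ T \ M}, (1 - q) ^ (y i : ℕ) * q ^ (1 - (y i : ℕ))


open Finset

section Aux
variable {ι : Type*} [DecidableEq ι]

/-- Auxiliary powerset form of the missed-detection sum, with free constant `c`. -/
noncomputable def mdAux (w1 w0 γ q : ℝ) (s : Finset ι) (c : ℝ) : ℝ :=
  ∑ A ∈ s.powerset,
    (if c + w1 * (A.card : ℝ) - w0 * ((s.card - A.card : ℕ) : ℝ) < γ then (1 : ℝ) else 0) *
      ((1 - q) ^ A.card * q ^ (s.card - A.card))

lemma mdAux_bridge (w1 w0 γ q : ℝ) (s : Finset ι) (c : ℝ) :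
    (∑ y : {i // i ∈ s} → Fin 2,
      (if (c + ∑ i : {i // i ∈ s},
          (w1 * ((y i : ℕ) : ℝ) - w0 * (1 - ((y i : ℕ) : ℝ)))) < γ then (1 : ℝ) else 0) *
      ∏ i : {i // i ∈ s}, (1 - q) ^ (y i : ℕ) * q ^ (1 - (y i : ℕ)))
    = mdAux w1 w0 γ q s c := by
  classical
  unfold mdAux
  refine Finset.sum_nbij'
    (fun y => (Finset.univ.filter (fun i => y i = 1)).image Subtype.val)
    (fun A => fun i => if (i : ι) ∈ A then (1 : Fin 2) else 0) ?_ ?_ ?_ ?_ ?_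
  · intro y _
    simp only [mem_powerset]
    intro x hx
    simp only [mem_image, mem_filter] at hx
    obtain ⟨i, _, rfl⟩ := hx
    exact i.2
  · intro A _; exact mem_univ _
  · intro y _
    funext i
    by_cases h : y i = 1
    · have hmem : (↑i : ι) ∈ (Finset.univ.filter (fun j => y j = 1)).image Subtype.val :=
        Finset.mem_image_of_mem _ (by simp [h])
      simp [hmem, h]
    · have h0 : y i = 0 := by omega
      have hmem : (↑i : ι) ∉ (Finset.univ.filter (fun j => y j = 1)).image Subtype.val := by
        simp only [mem_image, mem_filter, mem_univ, true_and]
        rintro ⟨j, hj, hji⟩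
        exact h (by rwa [Subtype.ext hji] at hj)
      simp [hmem, h0]
  · intro A hA
    simp only [mem_powerset] at hA
    ext x
    simp only [mem_image, mem_filter, mem_univ, true_and]
    constructor
    · rintro ⟨i, hi, rfl⟩
      by_contra hx
      simp [hx] at hi
    · intro hx
      exact ⟨⟨x, hA hx⟩, by simp [hx], rfl⟩
  · intro y _
    set A := (Finset.univ.filter (fun i => y i = 1)).image Subtype.val with hAdef
    have hcard : A.card = (Finset.univ.filter (fun i => y i = 1)).card :=
      Finset.card_image_of_injective _ Subtype.val_injective
    have hcardc : (Finset.univ.filter (fun i => ¬ y i = 1)).card = s.card - A.card := by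
      have h1 : (Finset.univ.filter (fun i => y i = 1)).card
          + (Finset.univ.filter (fun i => ¬ y i = 1)).card = Fintype.card {i // i ∈ s} :=
        Finset.card_filter_add_card_filter_not _
      have h2 : Fintype.card {i // i ∈ s} = s.card := Fintype.card_coe s
      omega
    have hAle : A.card ≤ s.card := by
      have h1 : (Finset.univ.filter (fun i => y i = 1)).card ≤ Finset.univ.card :=
        Finset.card_filter_le _ _
      have h2 : (Finset.univ : Finset {i // i ∈ s}).card = s.card := by
        rw [Finset.card_univ]; exact Fintype.card_coe s
      omega
    have hterm : ∀ i : {i // i ∈ s},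
        (w1 * ((y i : ℕ) : ℝ) - w0 * (1 - ((y i : ℕ) : ℝ)))
          = if y i = 1 then w1 else -w0 := by
      intro i
      by_cases h : y i = 1
      · simp [h]
      · have h0 : y i = 0 := by omega
        simp [h0]
    have hsum : ∑ i : {i // i ∈ s}, (w1 * ((y i : ℕ) : ℝ) - w0 * (1 - ((y i : ℕ) : ℝ)))
        = w1 * (A.card : ℝ) - w0 * ((s.card - A.card : ℕ) : ℝ) := by
      rw [Finset.sum_congr rfl (fun i _ => hterm i), Finset.sum_ite,
        Finset.sum_const, Finset.sum_const, ← hcard, hcardc, nsmul_eq_mul, nsmul_eq_mul]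
      ring
    have htermp : ∀ i : {i // i ∈ s},
        (1 - q) ^ (y i : ℕ) * q ^ (1 - (y i : ℕ)) = if y i = 1 then (1 - q) else q := by
      intro i
      by_cases h : y i = 1
      · simp [h]
      · have h0 : y i = 0 := by omega
        simp [h0]
    have hprod : ∏ i : {i // i ∈ s}, (1 - q) ^ (y i : ℕ) * q ^ (1 - (y i : ℕ))
        = (1 - q) ^ A.card * q ^ (s.card - A.card) := by
      rw [Finset.prod_congr rfl (fun i _ => htermp i), Finset.prod_ite,
        Finset.prod_const, Finset.prod_const, ← hcard, hcardc]
    rw [hsum, hprod]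
    have h3 : c + (w1 * (A.card : ℝ) - w0 * ((s.card - A.card : ℕ) : ℝ))
        = c + w1 * (A.card : ℝ) - w0 * ((s.card - A.card : ℕ) : ℝ) := by ring
    rw [h3]

lemma mdAux_insert (w1 w0 γ q : ℝ) (s : Finset ι) (a : ι) (ha : a ∉ s) (c : ℝ) :
    mdAux w1 w0 γ q (insert a s) c
      = q * mdAux w1 w0 γ q s (c - w0) + (1 - q) * mdAux w1 w0 γ q s (c + w1) := by
  classical
  unfold mdAux
  rw [Finset.powerset_insert, Finset.sum_union, Finset.mul_sum, Finset.mul_sum]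
  · congr 1
    · refine Finset.sum_congr rfl (fun A hA => ?_)
      simp only [mem_powerset] at hA
      have hk : A.card ≤ s.card := card_le_card hA
      have hc : (insert a s).card = s.card + 1 := Finset.card_insert_of_notMem ha
      have h1 : (insert a s).card - A.card = (s.card - A.card) + 1 := by omega
      have h2 : (c + w1 * (A.card : ℝ) - w0 * (((insert a s).card - A.card : ℕ) : ℝ))
          = (c - w0) + w1 * (A.card : ℝ) - w0 * ((s.card - A.card : ℕ) : ℝ) := by
        rw [h1]; push_cast; ring
      rw [h2, h1, pow_succ q]
      ring
    · rw [Finset.sum_image (fun A hA B hB h => ?_)]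
      · refine Finset.sum_congr rfl (fun A hA => ?_)
        simp only [mem_powerset] at hA
        have haA : a ∉ A := fun h => ha (hA h)
        have hk : A.card ≤ s.card := card_le_card hA
        have hc : (insert a s).card = s.card + 1 := Finset.card_insert_of_notMem ha
        have hcA : (insert a A).card = A.card + 1 := Finset.card_insert_of_notMem haA
        have h1 : (insert a s).card - (insert a A).card = s.card - A.card := by omega
        have h2 : (c + w1 * ((insert a A).card : ℝ)
              - w0 * (((insert a s).card - (insert a A).card : ℕ) : ℝ))
            = (c + w1) + w1 * (A.card : ℝ) - w0 * ((s.card - A.card : ℕ) : ℝ) := by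
          rw [h1, hcA]; push_cast; ring
        rw [h2, h1, hcA, pow_succ (1 - q)]
        ring
      · simp only [mem_coe, mem_powerset] at hA hB
        have haA : a ∉ A := fun hh => ha (hA hh)
        have haB : a ∉ B := fun hh => ha (hB hh)
        rw [← Finset.erase_insert haA, ← Finset.erase_insert haB, h]
  · rw [Finset.disjoint_left]
    intro A hA hA'
    simp only [mem_powerset] at hA
    simp only [mem_image, mem_powerset] at hA'
    obtain ⟨B, hB, rfl⟩ := hA'
    exact ha (hA (mem_insert_self a B))

lemma mdAux_anti (w1 w0 γ q : ℝ) (hq : q ∈ Set.Icc (0 : ℝ) 1) (s : Finset ι)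
    {c c' : ℝ} (h : c ≤ c') : mdAux w1 w0 γ q s c' ≤ mdAux w1 w0 γ q s c := by
  unfold mdAux
  refine Finset.sum_le_sum (fun A hA => ?_)
  have hw : (0:ℝ) ≤ (1 - q) ^ A.card * q ^ (s.card - A.card) :=
    mul_nonneg (pow_nonneg (by linarith [hq.2]) _) (pow_nonneg hq.1 _)
  refine mul_le_mul_of_nonneg_right ?_ hw
  split_ifs with h1 h2
  · exact le_refl _
  · exact absurd (by linarith) h2
  · exact zero_le_one
  · exact le_refl _

lemma mdAux_nonneg (w1 w0 γ q : ℝ) (hq : q ∈ Set.Icc (0 : ℝ) 1) (s : Finset ι) (c : ℝ) :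
    0 ≤ mdAux w1 w0 γ q s c := by
  unfold mdAux
  refine Finset.sum_nonneg (fun A hA => mul_nonneg ?_ ?_)
  · split_ifs <;> norm_num
  · exact mul_nonneg (pow_nonneg (by linarith [hq.2]) _) (pow_nonneg hq.1 _)

lemma condMD_eq (T M : Finset ι) (w1 w0 γ q : ℝ) :
    condMissedDetection T M w1 w0 γ q = mdAux w1 w0 γ q (T \ M) (-(M.card : ℝ) * w0) := by
  rw [← mdAux_bridge]
  rfl

lemma condMD_step (T M : Finset ι) (a : ι) (haT : a ∈ T) (haM : a ∉ M) (hMT : M ⊆ T)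
    (w1 w0 γ : ℝ) (hw1 : 0 < w1) (hw0 : 0 < w0)
    (q : ℝ) (hq : q ∈ Set.Icc (0 : ℝ) 1) :
    condMissedDetection T M w1 w0 γ q ≤ condMissedDetection T (insert a M) w1 w0 γ q := by
  rw [condMD_eq, condMD_eq]
  have hsd : T \ M = insert a (T \ insert a M) := by
    ext x
    simp only [mem_sdiff, mem_insert]
    constructor
    · rintro ⟨hxT, hxM⟩
      by_cases hxa : x = a
      · exact Or.inl hxa
      · exact Or.inr ⟨hxT, by tauto⟩
    · rintro (rfl | ⟨hxT, hx⟩)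
      · exact ⟨haT, haM⟩
      · exact ⟨hxT, fun h => hx (Or.inr h)⟩
  have hna : a ∉ T \ insert a M := by simp
  have hcard : ((insert a M).card : ℝ) = (M.card : ℝ) + 1 := by
    rw [Finset.card_insert_of_notMem haM]; push_cast; ring
  rw [hsd, mdAux_insert _ _ _ _ _ _ hna, hcard]
  have hc : -((M.card : ℝ) + 1) * w0 = -(M.card : ℝ) * w0 - w0 := by ring
  rw [hc]
  have h1 : mdAux w1 w0 γ q (T \ insert a M) (-(M.card : ℝ) * w0 + w1)
      ≤ mdAux w1 w0 γ q (T \ insert a M) (-(M.card : ℝ) * w0 - w0) :=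
    mdAux_anti _ _ _ _ hq _ (by linarith)
  nlinarith [hq.1, hq.2]

end Aux
/-- Monotonicity claim from Lemma 2 of the paper (missed-detection side): with the
worst-case malicious strategy, the conditional missed-detection probability only increases
when additional trusted robots are malicious rather than legitimate, i.e. it is monotone in
the set `M` of trusted malicious robots with respect to inclusion. -/
theorem condMissedDetection_monotone {ι : Type*} [DecidableEq ι]
    (T M M' : Finset ι) (hMM' : M ⊆ M') (hM'T : M' ⊆ T)
    (w1 w0 γ : ℝ) (hw1 : 0 < w1) (hw0 : 0 < w0)
    (q : ℝ) (hq : q ∈ Set.Icc (0 : ℝ) 1) :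
    condMissedDetection T M w1 w0 γ q ≤ condMissedDetection T M' w1 w0 γ q := by
  classical
  have key : ∀ s : Finset ι, M ∪ s ⊆ T →
      condMissedDetection T M w1 w0 γ q ≤ condMissedDetection T (M ∪ s) w1 w0 γ q := by
    intro s
    induction s using Finset.induction_on with
    | empty => simp
    | @insert a s ha ih =>
      intro hsub
      have h1 : M ∪ insert a s = insert a (M ∪ s) := Finset.union_insert a M s
      rw [h1]
      have hUT : M ∪ s ⊆ T := fun x hx => hsub (by
        simp only [Finset.mem_union, Finset.mem_insert] at hx ⊢; tauto)
      by_cases haU : a ∈ M ∪ s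
      · rw [Finset.insert_eq_self.mpr haU]
        exact ih hUT
      · have haT : a ∈ T := hsub (by simp)
        exact le_trans (ih hUT) (condMD_step T (M ∪ s) a haT haU hUT w1 w0 γ hw1 hw0 q hq)
  have hM' : M' = M ∪ (M' \ M) := (Finset.union_sdiff_of_subset hMM').symm
  rw [hM']
  exact key _ (by rw [← hM']; exact hM'T)
end

section
/- Let A be a nonempty finite set and let p_1, p_0 : A → ℝ satisfy p_1(a) > 0 and p_0(a) > 0 for all a ∈ A, ∑_{a∈A} p_1(a) = 1, and ∑_{a∈A} p_0(a) = 1. Define the likelihood ratio r(a) := p_1(a)/p_0(a) and the finite set Γ_t := { r(a) : a ∈ A }. For γ ∈ ℝ and p ∈ [0,1] define P_L(γ, p) := ∑_{a : r(a) > γ} p_1(a) + p · ∑_{a : r(a) = γ} p_1(a) and P_M(γ, p) := ∑_{a : r(a) > γ} p_0(a) + p · ∑_{a : r(a) = γ} p_0(a). Then for every γ ∈ ℝ and p ∈ [0,1] there exist γ' ∈ Γ_t and p' ∈ [0,1] such that P_L(γ', p') = P_L(γ, p) and P_M(γ', p') = P_M(γ, p). -/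
/-!
If `γ` is itself a likelihood value there is nothing to do. Otherwise nothing ties with `γ`, so
the test accepts exactly the outcomes whose value is at least the smallest value `γ⁺` above `γ`:
this is the test at `γ⁺` with ties accepted (`p' = 1`). If no value lies above `γ`, the test
accepts nothing, as does the test at the largest value with ties rejected (`p' = 0`).
-/

open Finset

section ThresholdTest

variable {ι α : Type*} [Fintype ι] [LinearOrder α]

/-- The paper's `P_L(γ, p)` for `f = p₁` and `P_M(γ, p)` for `f = p₀`. -/
noncomputable def acceptMass (r : ι → α) (f : ι → ℝ) (γ : α) (p : ℝ) : ℝ :=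
  ∑ a ∈ univ.filter (fun a => γ < r a), f a + p * ∑ a ∈ univ.filter (fun a => r a = γ), f a

lemma acceptMass_one (r : ι → α) (f : ι → ℝ) (γ : α) :
    acceptMass r f γ 1 = ∑ a ∈ univ.filter (fun a => γ ≤ r a), f a := by
  rw [acceptMass, one_mul, ← sum_filter_add_sum_filter_not (univ.filter (fun a => γ ≤ r a))
    (fun a => γ < r a), filter_filter, filter_filter]
  congr 2 <;> ext a <;> simp only [mem_filter, mem_univ, true_and, not_lt]
  · exact ⟨fun h => ⟨h.le, h⟩, And.right⟩
  · exact ⟨fun h => ⟨h.ge, h.le⟩, fun h => le_antisymm h.2 h.1⟩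

lemma acceptMass_of_forall_ne (r : ι → α) (f : ι → ℝ) {γ : α} (p : ℝ) (hγ : ∀ a, r a ≠ γ) :
    acceptMass r f γ p = ∑ a ∈ univ.filter (fun a => γ < r a), f a := by
  rw [acceptMass, filter_false_of_mem (fun a _ => hγ a), sum_empty, mul_zero, add_zero]

lemma acceptMass_of_forall_le (r : ι → α) (f : ι → ℝ) {γ : α} (hγ : ∀ a, r a ≤ γ) :
    acceptMass r f γ 0 = 0 := by
  rw [acceptMass, filter_false_of_mem (fun a _ => (hγ a).not_gt), sum_empty, zero_mul, add_zero]

theorem exists_value_threshold_acceptMass_eq [Nonempty ι] (r : ι → α) (γ : α) (p : ℝ)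
    (hp : p ∈ Set.Icc (0 : ℝ) 1) :
    ∃ a₀, ∃ p' ∈ Set.Icc (0 : ℝ) 1, ∀ f, acceptMass r f (r a₀) p' = acceptMass r f γ p := by
  by_cases hγ : ∃ a₀, r a₀ = γ
  · obtain ⟨a₀, rfl⟩ := hγ
    exact ⟨a₀, p, hp, fun _ => rfl⟩
  push Not at hγ
  by_cases habove : ∃ a, γ < r a
  · obtain ⟨a₀, ha₀, hmin⟩ := exists_min_image (univ.filter (fun a => γ < r a)) r
      (by simpa [Finset.Nonempty] using habove)
    rw [mem_filter] at ha₀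
    have hfilter : univ.filter (fun a => γ < r a) = univ.filter (fun a => r a₀ ≤ r a) := by
      ext a
      simp only [mem_filter, mem_univ, true_and]
      exact ⟨fun h => hmin a (by simpa using h), ha₀.2.trans_le⟩
    refine ⟨a₀, 1, ⟨zero_le_one, le_rfl⟩, fun f => ?_⟩
    rw [acceptMass_one, acceptMass_of_forall_ne r f p hγ, hfilter]
  · push Not at habove
    obtain ⟨a₀, -, hmax⟩ := exists_max_image univ r univ_nonempty
    refine ⟨a₀, 0, ⟨le_rfl, zero_le_one⟩, fun f => ?_⟩
    rw [acceptMass_of_forall_le r f (fun a => hmax a (mem_univ a)),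
      acceptMass_of_forall_ne r f p hγ, filter_false_of_mem (fun a _ => (habove a).not_gt),
      sum_empty]

end ThresholdTest

theorem lrt_threshold_reduction_general
    {ι : Type*} [Fintype ι] [Nonempty ι]
    (p1 p0 : ι → ℝ) :
    ∀ (γ : ℝ), ∀ p ∈ Set.Icc (0 : ℝ) 1,
      ∃ (a0 : ι), ∃ p' ∈ Set.Icc (0 : ℝ) 1,
        ((∑ a ∈ Finset.univ.filter (fun a => p1 a0 / p0 a0 < p1 a / p0 a), p1 a) +
            p' * ∑ a ∈ Finset.univ.filter (fun a => p1 a / p0 a = p1 a0 / p0 a0), p1 a)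
          = ((∑ a ∈ Finset.univ.filter (fun a => γ < p1 a / p0 a), p1 a) +
              p * ∑ a ∈ Finset.univ.filter (fun a => p1 a / p0 a = γ), p1 a) ∧
        ((∑ a ∈ Finset.univ.filter (fun a => p1 a0 / p0 a0 < p1 a / p0 a), p0 a) +
            p' * ∑ a ∈ Finset.univ.filter (fun a => p1 a / p0 a = p1 a0 / p0 a0), p0 a)
          = ((∑ a ∈ Finset.univ.filter (fun a => γ < p1 a / p0 a), p0 a) +
              p * ∑ a ∈ Finset.univ.filter (fun a => p1 a / p0 a = γ), p0 a) := by
  intro γ p hp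
  obtain ⟨a0, p', hp', hmass⟩ :=
    exists_value_threshold_acceptMass_eq (fun a => p1 a / p0 a) γ p hp
  exact ⟨a0, p', hp', hmass p1, hmass p0⟩

/-- Lemma 3 of the paper: in the randomized likelihood-ratio trust test with threshold `γ`
and tie-break probability `p`, the pair of operating probabilities (probability of trusting
a legitimate robot, probability of trusting a malicious robot) achieved by any `γ ∈ ℝ` can
already be achieved with a threshold from the finite set `Γ_t` of likelihood-ratio values
`p1 a / p0 a`. -/
theorem lrt_threshold_reduction
    {ι : Type*} [Fintype ι] [Nonempty ι]
    (p1 p0 : ι → ℝ) (hp1 : ∀ a, 0 < p1 a) (hp0 : ∀ a, 0 < p0 a)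
    (hsum1 : ∑ a, p1 a = 1) (hsum0 : ∑ a, p0 a = 1) :
    ∀ (γ : ℝ), ∀ p ∈ Set.Icc (0 : ℝ) 1,
      ∃ (a0 : ι), ∃ p' ∈ Set.Icc (0 : ℝ) 1,
        ((∑ a ∈ Finset.univ.filter (fun a => p1 a0 / p0 a0 < p1 a / p0 a), p1 a) +
            p' * ∑ a ∈ Finset.univ.filter (fun a => p1 a / p0 a = p1 a0 / p0 a0), p1 a)
          = ((∑ a ∈ Finset.univ.filter (fun a => γ < p1 a / p0 a), p1 a) +
              p * ∑ a ∈ Finset.univ.filter (fun a => p1 a / p0 a = γ), p1 a) ∧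
        ((∑ a ∈ Finset.univ.filter (fun a => p1 a0 / p0 a0 < p1 a / p0 a), p0 a) +
            p' * ∑ a ∈ Finset.univ.filter (fun a => p1 a / p0 a = p1 a0 / p0 a0), p0 a)
          = ((∑ a ∈ Finset.univ.filter (fun a => γ < p1 a / p0 a), p0 a) +
              p * ∑ a ∈ Finset.univ.filter (fun a => p1 a / p0 a = γ), p0 a) :=
  lrt_threshold_reduction_general p1 p0
end
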